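/- Fix h ≥ 0 and n ≥ 1, and let ∼ be the equivalence relation on the set B_n of bracketings of size n that relates t and t' if and only if the DFS trees G(t) and G(t') coincide up to level h, i.e., for every i ∈ {1,…,n}, if d_{G(t)}(x_i) ≤ h or d_{G(t')}(x_i) ≤ h then the parent of x_i in G(t) equals the parent of x_i in G(t') (equivalently, the two trees agree on all vertices of depth at most h). Then the number of equivalence classes of ∼ is exactly t_{h+1}(n), the number of DFS trees of size n of height at most h+1. -/
import Mathlib


namespace AssocSpec

/-- Bracketings of products `x₁ x₂ ⋯ xₙ` represented as binary trees whose
leaves, read from left to right, are the variables `x₁, …, xₙ`. -/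
inductive BTree : Type
  | leaf : BTree
  | node : BTree → BTree → BTree

namespace BTree

/-- The size of a bracketing: its number of variables (leaves). -/
def size : BTree → ℕ
  | leaf => 1
  | node l r => l.size + r.size

/-- Evaluate a bracketing in a magma `(A, op)`, the leaves taking the values
`f k, f (k+1), …` from left to right. -/
def evalFrom {A : Type*} (op : A → A → A) : BTree → (ℕ → A) → ℕ → A
  | leaf, f, k => f k
  | node l r, f, k => op (evalFrom op l f k) (evalFrom op r f (k + l.size))

/-- The term operation induced by a bracketing `t` on a magma `(A, op)`;
the `i`-th variable (0-indexed) takes the value `f i`. -/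
def termOp {A : Type*} (op : A → A → A) (t : BTree) (f : ℕ → A) : A :=
  evalFrom op t f 0

/-- The depth sequence of the DFS tree `G(t)` of a bracketing `t`: the `i`-th
entry is the depth of the `i`-th variable (0-indexed) in `G(t)`. -/
def depths : BTree → List ℕ
  | leaf => [0]
  | node l r => l.depths ++ r.depths.map (· + 1)

/-- The depth of the `i`-th variable (0-indexed) in the DFS tree `G(t)`. -/
def depth (t : BTree) (i : ℕ) : ℕ := t.depths.getD i 0

/-- The height of the DFS tree `G(t)`: the maximum depth of a variable. -/
def height (t : BTree) : ℕ := t.depths.foldr max 0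

/-- The edges of the DFS tree `G(t)`, the variables being indexed from the
given offset: `(p, c)` is an edge iff `x_p` is the parent of `x_c`. -/
def edgesFrom : BTree → ℕ → List (ℕ × ℕ)
  | leaf, _ => []
  | node l r, k => (k, k + l.size) :: (l.edgesFrom k ++ r.edgesFrom (k + l.size))

/-- The edges of the DFS tree `G(t)` (variables indexed from `0`). -/
def edges (t : BTree) : List (ℕ × ℕ) := t.edgesFrom 0

end BTree

open Classical in
/-- The operation of the graph algebra of the digraph with vertex set `V` and
edge relation `E`; `none` plays the role of `∞`. -/
noncomputable def gaOp {V : Type*} (E : V → V → Prop) :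
    Option V → Option V → Option V
  | some x, some y => if E x y then some x else none
  | _, _ => none

/-- The magma `(A, op)` satisfies the bracketing identity `t ≈ t'`. -/
def Satisfies {A : Type*} (op : A → A → A) (t t' : BTree) : Prop :=
  ∀ f : ℕ → A, BTree.termOp op t f = BTree.termOp op t' f

/-- The `n`-th member `s_n` of the associative spectrum of the magma `(A, op)`:
the number of distinct term operations induced by bracketings of size `n`. -/
noncomputable def spectrum {A : Type*} (op : A → A → A) (n : ℕ) : ℕ :=
  Set.ncard {g : (ℕ → A) → A | ∃ t : BTree, t.size = n ∧ g = BTree.termOp op t}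

/-- Reachability (by a walk) in the digraph with edge relation `E`. -/
def Reach {V : Type*} (E : V → V → Prop) : V → V → Prop :=
  Relation.ReflTransGen E

/-- `u` and `v` lie in the same strongly connected component. -/
def SameSCC {V : Type*} (E : V → V → Prop) (u v : V) : Prop :=
  Reach E u v ∧ Reach E v u

/-- The strongly connected component of `v`, as a set of vertices. -/
def scc {V : Type*} (E : V → V → Prop) (v : V) : Set V :=
  {u | SameSCC E u v}

/-- `v` lies in a nontrivial strongly connected component (one carrying at
least one edge), i.e. `v` lies on a closed walk of positive length. -/
def InNontrivialSCC {V : Type*} (E : V → V → Prop) (v : V) : Prop :=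
  ∃ u, E v u ∧ Reach E u v

/-- The induced subgraph on the set `K` (with the edge relation `E`) is an
`m`-whirl: `K` is partitioned into blocks `B 0, …, B (m-1)` so that edges go
exactly from each block to the cyclically next one. -/
def IsWhirlOn {V : Type*} (E : V → V → Prop) (K : Set V) (m : ℕ) : Prop :=
  ∃ B : ZMod m → Set V,
    (∀ i, (B i).Nonempty) ∧
    (∀ i, B i ⊆ K) ∧
    (∀ x ∈ K, ∃! i, x ∈ B i) ∧
    (∀ x ∈ K, ∀ y ∈ K, (E x y ↔ ∃ i, x ∈ B i ∧ y ∈ B (i + 1)))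

/-- `p 0 → p 1 → ⋯ → p len` is a path (a walk with pairwise distinct
vertices) in the digraph with edge relation `E`. -/
def IsPath {V : Type*} (E : V → V → Prop) (len : ℕ) (p : ℕ → V) : Prop :=
  (∀ i < len, E (p i) (p (i + 1))) ∧
  (∀ i ≤ len, ∀ j ≤ len, p i = p j → i = j)

/-- The walk `p 0 → ⋯ → p len` is pleasant: all its vertices belong to
trivial strongly connected components. -/
def IsPleasant {V : Type*} (E : V → V → Prop) (len : ℕ) (p : ℕ → V) : Prop :=
  ∀ i ≤ len, ¬ InNontrivialSCC E (p i)

/-- The connected component `K` (of an undirected graph) is complete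
bipartite: it splits into two nonempty parts with edges exactly between
vertices of different parts. -/
def IsCompleteBipartiteOn {V : Type*} (E : V → V → Prop) (K : Set V) : Prop :=
  ∃ B1 B2 : Set V, B1.Nonempty ∧ B2.Nonempty ∧ B1 ∪ B2 = K ∧ B1 ∩ B2 = ∅ ∧
    ∀ x ∈ K, ∀ y ∈ K, (E x y ↔ (x ∈ B1 ∧ y ∈ B2) ∨ (x ∈ B2 ∧ y ∈ B1))

/-- A DFS tree of size `n`: a rooted directed tree on the vertices
`x₁, …, xₙ` (here `Fin n`, the root being `0`), given by its parent function,
such that the parent of every non-root vertex precedes it and the vertex set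
of the induced subtree rooted at any vertex `i` is an interval `[i, i']`.
(The parent of the root is, by convention, the root itself.) -/
structure DFSTree (n : ℕ) where
  parent : Fin n → Fin n
  parent_lt : ∀ i : Fin n, 0 < (i : ℕ) → (parent i : ℕ) < (i : ℕ)
  parent_root : ∀ i : Fin n, (i : ℕ) = 0 → parent i = i
  interval : ∀ i j k : Fin n, i ≤ j → j ≤ k →
    (∃ a : ℕ, parent^[a] k = i) → (∃ a : ℕ, parent^[a] j = i)

/-- The depth of the vertex `i` in a DFS tree: the length of the path from
the root to `i`. -/
noncomputable def DFSTree.depth {n : ℕ} (T : DFSTree n) (i : Fin n) : ℕ :=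
  sInf {k : ℕ | (T.parent^[k] i : ℕ) = 0}

/-- The height of a DFS tree: the maximum depth of a vertex. -/
noncomputable def DFSTree.height {n : ℕ} (T : DFSTree n) : ℕ :=
  Finset.univ.sup fun i => T.depth i

/-- The vertex `i` is a leaf (childless vertex) of the DFS tree `T`. -/
def DFSTree.IsLeaf {n : ℕ} (T : DFSTree n) (i : Fin n) : Prop :=
  ∀ j : Fin n, T.parent j = i → j = i

/-- `t_h(n)`: the number of DFS trees of size `n` of height at most `h`. -/
noncomputable def tcount (h n : ℕ) : ℕ :=
  Nat.card {T : DFSTree n // T.height ≤ h}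

/-- `d` is a zag sequence: `d₁ = 0`, `d₂ = 1`, and
`1 ≤ d_{i+1} ≤ d_i + 1` for all `i` (1-indexed as in the paper;
here `d : Fin n → ℕ` is 0-indexed). -/
def IsZag {n : ℕ} (d : Fin n → ℕ) : Prop :=
  (∀ h : 0 < n, d ⟨0, h⟩ = 0) ∧
  (∀ h : 1 < n, d ⟨1, h⟩ = 1) ∧
  (∀ i : ℕ, ∀ h : i + 1 < n,
    1 ≤ d ⟨i + 1, h⟩ ∧ d ⟨i + 1, h⟩ ≤ d ⟨i, Nat.lt_of_succ_lt h⟩ + 1)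

/-- `M(t,t')`: the largest `m` such that the depth sequences of the DFS trees
of the bracketings `t` and `t'` are congruent modulo `m`. -/
noncomputable def Mval (t t' : BTree) : ℕ :=
  sSup {m : ℕ | ∀ i < t.size, t.depth i ≡ t'.depth i [MOD m]}

namespace BTree

/-- parent of vertex `c` (absolute index, tree rooted at 0). Junk for `c = 0` or `c ≥ size`. -/
def parentAt : BTree → ℕ → ℕ
  | leaf, _ => 0
  | node l r, c =>
    if c < l.size then parentAt l c
    else if c = l.size then 0
    else parentAt r (c - l.size) + l.size

/-- depth of vertex `c`. Junk for `c ≥ size`. -/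
def depthAt : BTree → ℕ → ℕ
  | leaf, _ => 0
  | node l r, c => if c < l.size then depthAt l c else depthAt r (c - l.size) + 1

theorem size_pos (t : BTree) : 1 ≤ t.size := by
  induction t with
  | leaf => simp [size]
  | node l r ihl ihr => simp [size]; omega

theorem parentAt_le (t : BTree) (c : ℕ) : parentAt t c ≤ c := by
  induction t generalizing c with
  | leaf => simp [parentAt]
  | node l r ihl ihr =>
    simp only [parentAt]
    split
    · exact ihl c
    · split
      · omega
      · have := ihr (c - l.size); omega

theorem parentAt_lt (t : BTree) (c : ℕ) (hc : 0 < c) (hc' : c < t.size) : parentAt t c < c := by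
  induction t generalizing c with
  | leaf => simp [size] at hc'; omega
  | node l r ihl ihr =>
    simp only [parentAt]
    split
    · exact ihl c hc ‹_›
    · split
      · omega
      · have h1 : 0 < c - l.size := by omega
        have h2 : c - l.size < r.size := by simp [size] at hc'; omega
        have := ihr (c - l.size) h1 h2; omega

theorem parentAt_zero (t : BTree) : parentAt t 0 = 0 := by
  have := parentAt_le t 0; omega

theorem parentAt_lt_size (t : BTree) (c : ℕ) (hc : c < t.size) : parentAt t c < t.size :=
  lt_of_le_of_lt (parentAt_le t c) hc

theorem depthAt_zero (t : BTree) : depthAt t 0 = 0 := by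
  induction t with
  | leaf => rfl
  | node l r ihl ihr =>
    have := l.size_pos
    simp only [depthAt]
    rw [if_pos (by omega)]
    exact ihl

theorem depthAt_pos (t : BTree) (c : ℕ) (hc : 0 < c) (hc' : c < t.size) : 0 < depthAt t c := by
  induction t generalizing c with
  | leaf => simp [size] at hc'; omega
  | node l r ihl ihr =>
    simp only [depthAt]
    split
    · exact ihl c hc ‹_›
    · omega

theorem depthAt_eq_zero_iff (t : BTree) (c : ℕ) (hc' : c < t.size) : depthAt t c = 0 ↔ c = 0 := by
  constructor
  · intro h
    by_contra hc
    have := depthAt_pos t c (by omega) hc'; omega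
  · rintro rfl; exact depthAt_zero t

theorem depthAt_parentAt (t : BTree) (c : ℕ) (hc : 0 < c) (hc' : c < t.size) :
    depthAt t c = depthAt t (parentAt t c) + 1 := by
  induction t generalizing c with
  | leaf => simp [size] at hc'; omega
  | node l r ihl ihr =>
    rcases lt_trichotomy c l.size with h | h | h
    · have hp : parentAt l c < l.size := lt_of_le_of_lt (parentAt_le l c) h
      simp only [depthAt, parentAt, if_pos h, if_pos hp]
      exact ihl c hc h
    · subst h
      have hp : parentAt (node l r) l.size = 0 := by
        simp [parentAt]
      rw [hp, depthAt_zero]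
      simp [depthAt, depthAt_zero]
    · have h1 : 0 < c - l.size := by omega
      have h2 : c - l.size < r.size := by simp [size] at hc'; omega
      have hnl : ¬ c < l.size := by omega
      have hne : ¬ c = l.size := by omega
      simp only [depthAt, parentAt, if_neg hnl, if_neg hne]
      rw [if_neg (by omega), Nat.add_sub_cancel]
      rw [ihr (c - l.size) h1 h2]

theorem iter_parentAt_le (t : BTree) (b c : ℕ) : (parentAt t)^[b] c ≤ c := by
  induction b generalizing c with
  | zero => simp
  | succ b ih =>
    rw [Function.iterate_succ_apply]
    exact le_trans (ih _) (parentAt_le t c)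

theorem depthAt_iter (t : BTree) (b c : ℕ) (hc : c < t.size) (hb : b ≤ depthAt t c) :
    depthAt t ((parentAt t)^[b] c) = depthAt t c - b := by
  induction b generalizing c with
  | zero => simp
  | succ b ih =>
    have hc0 : 0 < c := by
      by_contra hc0
      have : c = 0 := by omega
      subst this; rw [depthAt_zero] at hb; omega
    rw [Function.iterate_succ_apply]
    have hp := parentAt_lt t c hc0 hc
    have hd := depthAt_parentAt t c hc0 hc
    rw [ih (parentAt t c) (by omega) (by omega)]
    omega

theorem iter_reach_root (t : BTree) (c : ℕ) (hc : c < t.size) :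
    (parentAt t)^[depthAt t c] c = 0 := by
  have h := depthAt_iter t (depthAt t c) c hc le_rfl
  rw [Nat.sub_self] at h
  have hlt : (parentAt t)^[depthAt t c] c < t.size :=
    lt_of_le_of_lt (iter_parentAt_le t _ c) hc
  exact (depthAt_eq_zero_iff t _ hlt).1 h

end BTree

namespace BTree

/-- The ancestor of `c` at depth `e` (for `e ≤ depthAt t c`). -/
def ancAt (t : BTree) (c e : ℕ) : ℕ := (parentAt t)^[depthAt t c - e] c

theorem ancAt_le (t : BTree) (c e : ℕ) : ancAt t c e ≤ c := iter_parentAt_le t _ c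

theorem ancAt_lt_size (t : BTree) (c e : ℕ) (hc : c < t.size) : ancAt t c e < t.size :=
  lt_of_le_of_lt (ancAt_le t c e) hc

theorem depthAt_ancAt (t : BTree) (c e : ℕ) (hc : c < t.size) (he : e ≤ depthAt t c) :
    depthAt t (ancAt t c e) = e := by
  rw [ancAt, depthAt_iter t _ c hc (by omega)]; omega

theorem ancAt_self (t : BTree) (c : ℕ) : ancAt t c (depthAt t c) = c := by
  rw [ancAt, Nat.sub_self]; rfl

theorem ancAt_zero_eq_root (t : BTree) (c : ℕ) (hc : c < t.size) : ancAt t c 0 = 0 := by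
  rw [ancAt, Nat.sub_zero]; exact iter_reach_root t c hc

theorem ancAt_parent (t : BTree) (c e : ℕ) (hc : 0 < c) (hc' : c < t.size)
    (he : e < depthAt t c) : ancAt t c e = ancAt t (parentAt t c) e := by
  have hd := depthAt_parentAt t c hc hc'
  rw [ancAt, ancAt, hd]
  have h1 : depthAt t (parentAt t c) + 1 - e = (depthAt t (parentAt t c) - e) + 1 := by omega
  rw [h1, Function.iterate_succ_apply]

theorem ancAt_ancAt (t : BTree) (c e e' : ℕ) (hc : c < t.size) (he : e ≤ e')
    (he' : e' ≤ depthAt t c) : ancAt t (ancAt t c e') e = ancAt t c e := by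
  conv_lhs => rw [ancAt, depthAt_ancAt t c e' hc he']
  rw [ancAt, ancAt, ← Function.iterate_add_apply]
  congr 1
  omega

theorem parentAt_node_left (l r : BTree) (c : ℕ) (hc : c < l.size) :
    parentAt (node l r) c = parentAt l c := by
  simp [parentAt, hc]

theorem depthAt_node_left (l r : BTree) (c : ℕ) (hc : c < l.size) :
    depthAt (node l r) c = depthAt l c := by
  simp [depthAt, hc]

theorem parentAt_node_right (l r : BTree) (c : ℕ) (hc : l.size < c) :
    parentAt (node l r) c = parentAt r (c - l.size) + l.size := by
  simp only [parentAt]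
  rw [if_neg (by omega), if_neg (by omega)]

theorem depthAt_node_right (l r : BTree) (c : ℕ) (hc : l.size ≤ c) :
    depthAt (node l r) c = depthAt r (c - l.size) + 1 := by
  simp only [depthAt]
  rw [if_neg (by omega)]

theorem iter_node_left (l r : BTree) (b c : ℕ) (hc : c < l.size) :
    (parentAt (node l r))^[b] c = (parentAt l)^[b] c := by
  induction b generalizing c with
  | zero => simp
  | succ b ih =>
    rw [Function.iterate_succ_apply, Function.iterate_succ_apply,
      parentAt_node_left l r c hc]
    exact ih _ (lt_of_le_of_lt (parentAt_le l c) hc)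

theorem iter_node_right (l r : BTree) (b c : ℕ) (hc : c < r.size) (hb : b ≤ depthAt r c) :
    (parentAt (node l r))^[b] (c + l.size) = (parentAt r)^[b] c + l.size := by
  induction b generalizing c with
  | zero => simp
  | succ b ih =>
    have hc0 : 0 < c := by
      by_contra h
      have : c = 0 := by omega
      subst this; rw [depthAt_zero] at hb; omega
    rw [Function.iterate_succ_apply, Function.iterate_succ_apply,
      parentAt_node_right l r (c + l.size) (by omega)]
    rw [Nat.add_sub_cancel]
    have hd := depthAt_parentAt r c hc0 hc
    exact ih (parentAt r c) (lt_of_le_of_lt (parentAt_le r c) hc) (by omega)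

theorem ancAt_node_left (l r : BTree) (c e : ℕ) (hc : c < l.size) :
    ancAt (node l r) c e = ancAt l c e := by
  rw [ancAt, ancAt, depthAt_node_left l r c hc, iter_node_left l r _ c hc]

/-- The zag property: depths increase by at most one, and the parent of `c` is the
ancestor of `c - 1` at depth `depthAt t c - 1`. -/
theorem zag (t : BTree) (c : ℕ) (hc : 0 < c) (hc' : c < t.size) :
    depthAt t c ≤ depthAt t (c - 1) + 1 ∧
      parentAt t c = ancAt t (c - 1) (depthAt t c - 1) := by
  induction t generalizing c with
  | leaf => simp [size] at hc'; omega
  | node l r ihl ihr =>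
    have hls := l.size_pos
    have hrs := r.size_pos
    have hsz : (node l r).size = l.size + r.size := rfl
    rcases lt_trichotomy c l.size with h | h | h
    · have hc1 : c - 1 < l.size := by omega
      obtain ⟨z1, z2⟩ := ihl c hc h
      rw [depthAt_node_left l r c h, depthAt_node_left l r (c-1) hc1,
        parentAt_node_left l r c h, ancAt_node_left l r (c-1) _ hc1]
      exact ⟨z1, z2⟩
    · subst h
      have hdc : depthAt (node l r) l.size = 1 := by
        rw [depthAt_node_right l r _ le_rfl, Nat.sub_self, depthAt_zero]
      constructor
      · omega
      · have hp : parentAt (node l r) l.size = 0 := by simp [parentAt]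
        rw [hp, hdc]
        rw [ancAt_zero_eq_root (node l r) (l.size - 1) (by omega)]
    · rcases Nat.lt_or_ge (l.size + 1) c with h2 | h2
      · -- c > l.size + 1 : interior of r
        set y := c - l.size with hy
        have hy2 : 2 ≤ y := by omega
        have hyr : y < r.size := by omega
        obtain ⟨z1, z2⟩ := ihr y (by omega) hyr
        have hdr : 0 < depthAt r y := depthAt_pos r y (by omega) hyr
        have hc1 : l.size ≤ c - 1 := by omega
        have e1 : depthAt (node l r) c = depthAt r y + 1 :=
          depthAt_node_right l r c (by omega)
        have e2 : depthAt (node l r) (c-1) = depthAt r (y-1) + 1 := by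
          rw [depthAt_node_right l r (c-1) hc1]
          congr 2
          omega
        have e3 : parentAt (node l r) c = parentAt r y + l.size :=
          parentAt_node_right l r c (by omega)
        have hz1' : depthAt r y ≤ depthAt r (y - 1) + 1 := z1
        constructor
        · omega
        · rw [e3, e1, ancAt, e2]
          have harg : c - 1 = (y - 1) + l.size := by omega
          rw [harg]
          have hexp : depthAt r (y-1) + 1 - (depthAt r y + 1 - 1)
              = depthAt r (y-1) - (depthAt r y - 1) := by omega
          rw [hexp]
          rw [iter_node_right l r _ (y-1) (by omega) (by omega)]
          rw [z2, ancAt]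
      · -- c = l.size + 1
        have hc2 : c = l.size + 1 := by omega
        subst hc2
        have hr2 : 1 < r.size := by omega
        have hp1 : parentAt r 1 = 0 := by
          have := parentAt_lt r 1 one_pos hr2; omega
        have hd1 : depthAt r 1 = 1 := by
          rw [depthAt_parentAt r 1 one_pos hr2, hp1, depthAt_zero]
        have e1 : depthAt (node l r) (l.size + 1) = 2 := by
          rw [depthAt_node_right l r _ (by omega), Nat.add_sub_cancel_left, hd1]
        have e2 : depthAt (node l r) (l.size + 1 - 1) = 1 := by
          rw [Nat.add_sub_cancel, depthAt_node_right l r _ le_rfl, Nat.sub_self, depthAt_zero]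
        constructor
        · omega
        · have e3 : parentAt (node l r) (l.size + 1) = l.size := by
            rw [parentAt_node_right l r _ (by omega), Nat.add_sub_cancel_left, hp1]
            omega
          rw [e3, e1, ancAt, e2]
          norm_num

theorem ancAt_pred (t : BTree) (c e : ℕ) (hc : 0 < c) (hc' : c < t.size)
    (he : e < depthAt t c) : ancAt t c e = ancAt t (c - 1) e := by
  obtain ⟨z1, z2⟩ := zag t c hc hc'
  rw [ancAt_parent t c e hc hc' he, z2]
  exact ancAt_ancAt t (c-1) e _ (by omega) (by omega) (by omega)

end BTree

namespace BTree

theorem depths_length (t : BTree) : t.depths.length = t.size := by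
  induction t with
  | leaf => rfl
  | node l r ihl ihr => simp [depths, size, ihl, ihr]

theorem depth_eq_depthAt (t : BTree) (i : ℕ) (hi : i < t.size) : t.depth i = depthAt t i := by
  induction t generalizing i with
  | leaf =>
    have : i = 0 := by simpa [size] using hi
    subst this; rfl
  | node l r ihl ihr =>
    have hlen := l.depths_length
    have hrlen := r.depths_length
    have hds : (node l r).depths = l.depths ++ r.depths.map (· + 1) := rfl
    rcases Nat.lt_or_ge i l.size with h | h
    · rw [depthAt_node_left l r i h, ← ihl i h]
      unfold depth
      rw [hds, List.getD_append _ _ _ _ (by omega)]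
    · have hi' : i - l.size < r.size := by simp [size] at hi; omega
      rw [depthAt_node_right l r i h, ← ihr _ hi']
      unfold depth
      rw [hds, List.getD_append_right _ _ _ _ (by omega), hlen]
      have h1 : i - l.size < (r.depths.map (· + 1)).length := by
        rw [List.length_map, hrlen]; omega
      rw [List.getD_eq_getElem _ _ h1, List.getElem_map,
        List.getD_eq_getElem _ _ (by omega)]

theorem edgesFrom_mem (t : BTree) (k p c : ℕ) :
    (p, c) ∈ t.edgesFrom k ↔ k < c ∧ c < k + t.size ∧ p = k + parentAt t (c - k) := by
  induction t generalizing k with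
  | leaf => simp [edgesFrom, size, parentAt]; omega
  | node l r ihl ihr =>
    have hls := l.size_pos
    have hrs := r.size_pos
    simp only [edgesFrom, List.mem_cons, List.mem_append, ihl, ihr, Prod.mk.injEq, size]
    constructor
    · rintro (⟨hp, hc⟩ | ⟨h1, h2, h3⟩ | ⟨h1, h2, h3⟩)
      · subst hp; subst hc
        rw [Nat.add_sub_cancel_left]
        have : parentAt (node l r) l.size = 0 := by simp [parentAt]
        rw [this]
        omega
      · have h4 : c - k < l.size := by omega
        rw [parentAt_node_left l r _ h4]
        exact ⟨h1, by omega, h3⟩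
      · have h4 : l.size < c - k := by omega
        rw [parentAt_node_right l r _ h4]
        have e : c - (k + l.size) = c - k - l.size := by omega
        rw [e] at h3
        refine ⟨by omega, by omega, by omega⟩
    · rintro ⟨h1, h2, h3⟩
      rcases lt_trichotomy (c - k) l.size with h | h | h
      · rw [parentAt_node_left l r _ h] at h3
        exact Or.inr (Or.inl ⟨h1, by omega, h3⟩)
      · left
        have : parentAt (node l r) (c - k) = 0 := by rw [h]; simp [parentAt]
        rw [this] at h3
        omega
      · rw [parentAt_node_right l r _ h] at h3
        right; right
        have e : c - (k + l.size) = c - k - l.size := by omega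
        rw [e]
        refine ⟨by omega, by omega, by omega⟩

theorem edges_mem (t : BTree) (p c : ℕ) :
    (p, c) ∈ t.edges ↔ 0 < c ∧ c < t.size ∧ p = parentAt t c := by
  rw [edges, edgesFrom_mem]
  simp

end BTree

theorem fin_iter_coe {n : ℕ} (F : Fin n → Fin n) (g : ℕ → ℕ)
    (hFg : ∀ x : Fin n, (F x : ℕ) = g (x : ℕ)) :
    ∀ (a : ℕ) (x : Fin n), ((F^[a] x : Fin n) : ℕ) = g^[a] (x : ℕ) := by
  intro a
  induction a with
  | zero => simp
  | succ a ih =>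
    intro x
    rw [Function.iterate_succ_apply, Function.iterate_succ_apply, ih, hFg]

theorem natInterval (n : ℕ) (g : ℕ → ℕ)
    (hchain : ∀ i, 0 < i → i < n → ∃ a, g^[a] (i - 1) = g i) :
    ∀ k, k < n → ∀ i j : ℕ, i ≤ j → j ≤ k → (∃ a, g^[a] k = i) → ∃ a, g^[a] j = i := by
  intro k
  induction k using Nat.strong_induction_on with
  | _ k IH =>
    rintro hk i j hij hjk ⟨a, ha⟩
    rcases eq_or_lt_of_le hjk with rfl | hjk'
    · exact ⟨a, ha⟩
    · have hk0 : 0 < k := by omega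
      cases a with
      | zero => simp at ha; omega
      | succ a =>
        obtain ⟨b, hb⟩ := hchain k hk0 hk
        have key : g^[a + b] (k - 1) = i := by
          rw [Function.iterate_add_apply, hb, ← Function.iterate_succ_apply]
          exact ha
        exact IH (k - 1) (by omega) (by omega) i j hij (by omega) ⟨a + b, key⟩

/-- The parent function on `Fin n` induced by a suitable `g : ℕ → ℕ`. -/
def mkFin (n : ℕ) (g : ℕ → ℕ) (hg0 : g 0 = 0)
    (hlt : ∀ i, 0 < i → i < n → g i < i) : Fin n → Fin n := fun i =>
  ⟨g i, by
    rcases Nat.eq_zero_or_pos (i : ℕ) with h | h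
    · rw [h, hg0]; exact i.pos
    · exact lt_trans (hlt i h i.isLt) i.isLt⟩

theorem mkFin_coe (n : ℕ) (g : ℕ → ℕ) (hg0 : g 0 = 0)
    (hlt : ∀ i, 0 < i → i < n → g i < i) (i : Fin n) :
    (mkFin n g hg0 hlt i : ℕ) = g i := rfl

/-- Build a DFS tree from a parent function satisfying the chain property. -/
def mkDFS (n : ℕ) (g : ℕ → ℕ) (hg0 : g 0 = 0)
    (hlt : ∀ i, 0 < i → i < n → g i < i)
    (hchain : ∀ i, 0 < i → i < n → ∃ a, g^[a] (i - 1) = g i) : DFSTree n where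
  parent := mkFin n g hg0 hlt
  parent_lt i hi := by rw [mkFin_coe]; exact hlt i hi i.isLt
  parent_root i hi := by
    apply Fin.ext
    rw [mkFin_coe, hi, hg0]
  interval i j k hij hjk := by
    rintro ⟨a, ha⟩
    have hiter := fin_iter_coe (mkFin n g hg0 hlt) g (fun x => rfl)
    have ha' : g^[a] (k : ℕ) = (i : ℕ) := by rw [← hiter a k, ha]
    obtain ⟨a', ha''⟩ := natInterval n g hchain k k.isLt i j
      (Fin.le_def.mp hij) (Fin.le_def.mp hjk) ⟨a, ha'⟩
    exact ⟨a', Fin.ext (by rw [hiter a' j, ha''])⟩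

theorem mkDFS_parent_coe (n : ℕ) (g : ℕ → ℕ) (hg0 : g 0 = 0)
    (hlt : ∀ i, 0 < i → i < n → g i < i)
    (hchain : ∀ i, 0 < i → i < n → ∃ a, g^[a] (i - 1) = g i) (i : Fin n) :
    ((mkDFS n g hg0 hlt hchain).parent i : ℕ) = g i := rfl

/-- The parent function of a DFS tree, as a function `ℕ → ℕ`. -/
def Pnat {n : ℕ} (T : DFSTree n) : ℕ → ℕ := fun i =>
  if hi : i < n then ((T.parent ⟨i, hi⟩ : Fin n) : ℕ) else 0

theorem Pnat_coe {n : ℕ} (T : DFSTree n) (x : Fin n) :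
    Pnat T (x : ℕ) = (T.parent x : ℕ) := by
  simp only [Pnat, dif_pos x.isLt, Fin.eta]

theorem Pnat_iter_coe {n : ℕ} (T : DFSTree n) (a : ℕ) (x : Fin n) :
    ((T.parent^[a] x : Fin n) : ℕ) = (Pnat T)^[a] (x : ℕ) :=
  fin_iter_coe T.parent (Pnat T) (fun x => (Pnat_coe T x).symm) a x

theorem Pnat_lt {n : ℕ} (T : DFSTree n) (x : ℕ) (h0 : 0 < x) (hx : x < n) :
    Pnat T x < x := by
  rw [Pnat, dif_pos hx]
  exact T.parent_lt ⟨x, hx⟩ h0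

theorem Pnat_zero {n : ℕ} (T : DFSTree n) (hn : 0 < n) : Pnat T 0 = 0 := by
  rw [Pnat, dif_pos hn]
  rw [T.parent_root ⟨0, hn⟩ rfl]

theorem Pnat_chain {n : ℕ} (T : DFSTree n) (i : ℕ) (h0 : 0 < i) (hi : i < n) :
    ∃ a, (Pnat T)^[a] (i - 1) = Pnat T i := by
  have hj : i - 1 < n := by omega
  have hpl : ((T.parent ⟨i, hi⟩ : Fin n) : ℕ) < i := T.parent_lt ⟨i, hi⟩ h0
  have h1 : T.parent ⟨i, hi⟩ ≤ ⟨i - 1, hj⟩ := by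
    rw [Fin.le_def]
    show _ ≤ i - 1
    omega
  have h2 : (⟨i - 1, hj⟩ : Fin n) ≤ ⟨i, hi⟩ := by
    rw [Fin.le_def]
    show i - 1 ≤ i
    omega
  obtain ⟨a, ha⟩ := T.interval _ _ _ h1 h2 ⟨1, by simp⟩
  refine ⟨a, ?_⟩
  have h3 := Pnat_iter_coe T a ⟨i - 1, hj⟩
  have h4 : Pnat T i = ((T.parent ⟨i, hi⟩ : Fin n) : ℕ) := by rw [Pnat, dif_pos hi]
  rw [show ((⟨i - 1, hj⟩ : Fin n) : ℕ) = i - 1 from rfl] at h3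
  rw [← h3, ha, h4]

theorem DFSTree.depth_spec {n : ℕ} (T : DFSTree n) (d : ℕ → ℕ) (hd0 : d 0 = 0)
    (hrec : ∀ i, 0 < i → i < n → d i = d (Pnat T i) + 1) (i : Fin n) :
    T.depth i = d (i : ℕ) := by
  have hn : 0 < n := i.pos
  have mem : ∀ x, x < n → (Pnat T)^[d x] x = 0 := by
    intro x
    induction x using Nat.strong_induction_on with
    | _ x IH =>
      intro hx
      rcases Nat.eq_zero_or_pos x with h0 | h0
      · subst h0; rw [hd0]; rfl
      · rw [hrec x h0 hx, Function.iterate_succ_apply]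
        exact IH (Pnat T x) (Pnat_lt T x h0 hx) (lt_trans (Pnat_lt T x h0 hx) hx)
  have min : ∀ x, x < n → ∀ k, (Pnat T)^[k] x = 0 → d x ≤ k := by
    intro x
    induction x using Nat.strong_induction_on with
    | _ x IH =>
      intro hx k hk
      rcases Nat.eq_zero_or_pos x with h0 | h0
      · subst h0; rw [hd0]; omega
      · cases k with
        | zero => simp at hk; omega
        | succ k =>
          rw [Function.iterate_succ_apply] at hk
          have := IH (Pnat T x) (Pnat_lt T x h0 hx) (lt_trans (Pnat_lt T x h0 hx) hx) k hk
          rw [hrec x h0 hx]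
          omega
  have hset : {k : ℕ | ((T.parent^[k] i : Fin n) : ℕ) = 0}
      = {k : ℕ | (Pnat T)^[k] (i : ℕ) = 0} := by
    ext k
    simp only [Set.mem_setOf_eq, Pnat_iter_coe]
  rw [DFSTree.depth, hset]
  apply le_antisymm
  · exact Nat.sInf_le (mem i i.isLt)
  · exact le_csInf ⟨d i, mem i i.isLt⟩ (fun b hb => min i i.isLt b hb)

theorem DFSTree.parent_ext {n : ℕ} {T T' : DFSTree n} (h : T.parent = T'.parent) :
    T = T' := by
  cases T; cases T'; cases h; rfl

open BTree in
/-- The parent function of the DFS tree of `t` truncated at level `h + 1`. -/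
def trg (h : ℕ) (t : BTree) : ℕ → ℕ := fun c =>
  if depthAt t c ≤ h + 1 then parentAt t c else ancAt t (c - 1) h

namespace BTree

theorem trg_zero (h : ℕ) (t : BTree) : trg h t 0 = 0 := by
  rw [trg, if_pos (by rw [depthAt_zero]; omega), parentAt_zero]

theorem trg_lt (h : ℕ) (t : BTree) (c : ℕ) (hc : 0 < c) (hc' : c < t.size) :
    trg h t c < c := by
  rw [trg]
  split
  · exact parentAt_lt t c hc hc'
  · have := ancAt_le t (c - 1) h
    omega

theorem trg_reach (h : ℕ) (t : BTree) :
    ∀ c, c < t.size → ∀ e, e ≤ h → e ≤ depthAt t c →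
      ∃ a, (trg h t)^[a] c = ancAt t c e := by
  intro c
  induction c using Nat.strong_induction_on with
  | _ c IH =>
    intro hc e he hed
    by_cases hd : depthAt t c ≤ h + 1
    · rcases eq_or_lt_of_le hed with heq | hlt
      · exact ⟨0, by rw [Function.iterate_zero_apply, heq, ancAt_self]⟩
      · have hc0 : 0 < c := by
          by_contra h0
          have : c = 0 := by omega
          subst this; rw [depthAt_zero] at hlt; omega
        have hplt := parentAt_lt t c hc0 hc
        have hdp := depthAt_parentAt t c hc0 hc
        have htrg : trg h t c = parentAt t c := if_pos hd
        obtain ⟨a, ha⟩ := IH (parentAt t c) hplt (lt_trans hplt hc) e he (by omega)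
        refine ⟨a + 1, ?_⟩
        rw [Function.iterate_succ_apply, htrg, ha, ← ancAt_parent t c e hc0 hc hlt]
    · push_neg at hd
      have hc0 : 0 < c := by
        by_contra h0
        have : c = 0 := by omega
        subst this; rw [depthAt_zero] at hd; omega
    -- q = ancestor of c-1 at depth h
      have hz := (zag t c hc0 hc).1
      have hhd : h ≤ depthAt t (c - 1) := by omega
      have hc1 : c - 1 < t.size := by omega
      have hqle : ancAt t (c - 1) h ≤ c - 1 := ancAt_le t (c - 1) h
      have hqsz : ancAt t (c - 1) h < t.size := by omega
      have hqd : depthAt t (ancAt t (c - 1) h) = h := depthAt_ancAt t (c - 1) h hc1 hhd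
      have htrg : trg h t c = ancAt t (c - 1) h := if_neg (by omega)
      have hanc : ancAt t c e = ancAt t (ancAt t (c - 1) h) e := by
        rw [ancAt_pred t c e hc0 hc (by omega)]
        rw [ancAt_ancAt t (c - 1) e h hc1 he hhd]
      obtain ⟨a, ha⟩ := IH (ancAt t (c - 1) h) (by omega) hqsz e he (by omega)
      refine ⟨a + 1, ?_⟩
      rw [Function.iterate_succ_apply, htrg, ha, hanc]

theorem trg_high (h : ℕ) (t : BTree) (c : ℕ) (hc : 0 < c) (hc' : c < t.size)
    (hd : h + 1 ≤ depthAt t c) : trg h t c = ancAt t (c - 1) h := by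
  rw [trg]
  split
  · have heq : depthAt t c = h + 1 := by omega
    have := (zag t c hc hc').2
    rw [this, heq]
    norm_num
  · rfl

theorem trg_chain (h : ℕ) (t : BTree) (c : ℕ) (hc : 0 < c) (hc' : c < t.size) :
    ∃ a, (trg h t)^[a] (c - 1) = trg h t c := by
  have hz := (zag t c hc hc').1
  have hdc := depthAt_pos t c hc hc'
  have hc1 : c - 1 < t.size := by omega
  by_cases hd : depthAt t c ≤ h + 1
  · rw [trg, if_pos hd, (zag t c hc hc').2]
    exact trg_reach h t (c - 1) hc1 (depthAt t c - 1) (by omega) (by omega)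
  · rw [trg_high h t c hc hc' (by omega)]
    exact trg_reach h t (c - 1) hc1 h le_rfl (by omega)

theorem trg_depth (h : ℕ) (t : BTree) (c : ℕ) (hc : 0 < c) (hc' : c < t.size) :
    min (depthAt t c) (h + 1) = min (depthAt t (trg h t c)) (h + 1) + 1 := by
  have hdc := depthAt_pos t c hc hc'
  by_cases hd : depthAt t c ≤ h + 1
  · rw [trg, if_pos hd]
    have hrec := depthAt_parentAt t c hc hc'
    omega
  · push_neg at hd
    have hz := (zag t c hc hc').1
    rw [trg_high h t c hc hc' (by omega)]
    rw [depthAt_ancAt t (c - 1) h (by omega) (by omega)]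
    omega

end BTree

open BTree in
/-- The DFS tree of `t`, truncated at level `h + 1`. -/
def truncTree (h n : ℕ) (t : BTree) (ht : t.size = n) : DFSTree n :=
  mkDFS n (trg h t) (trg_zero h t)
    (fun i h0 hi => trg_lt h t i h0 (ht ▸ hi))
    (fun i h0 hi => trg_chain h t i h0 (ht ▸ hi))

theorem Pnat_mkDFS (n : ℕ) (g : ℕ → ℕ) (hg0 : g 0 = 0)
    (hlt : ∀ i, 0 < i → i < n → g i < i)
    (hchain : ∀ i, 0 < i → i < n → ∃ a, g^[a] (i - 1) = g i) (x : ℕ) (hx : x < n) :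
    Pnat (mkDFS n g hg0 hlt hchain) x = g x := by
  rw [Pnat, dif_pos hx]
  rfl

theorem Pnat_truncTree (h n : ℕ) (t : BTree) (ht : t.size = n) (x : ℕ) (hx : x < n) :
    Pnat (truncTree h n t ht) x = trg h t x :=
  Pnat_mkDFS n _ _ _ _ x hx

theorem truncTree_depth (h n : ℕ) (t : BTree) (ht : t.size = n) (i : Fin n) :
    (truncTree h n t ht).depth i = min (BTree.depthAt t i) (h + 1) := by
  refine DFSTree.depth_spec _ (fun c => min (BTree.depthAt t c) (h + 1)) ?_ ?_ i
  · simp [BTree.depthAt_zero]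
  · intro x h0 hx
    rw [Pnat_truncTree h n t ht x hx]
    exact BTree.trg_depth h t x h0 (ht ▸ hx)

theorem truncTree_height (h n : ℕ) (t : BTree) (ht : t.size = n) :
    (truncTree h n t ht).height ≤ h + 1 := by
  rw [DFSTree.height]
  apply Finset.sup_le
  intro i _
  rw [truncTree_depth]
  exact min_le_right _ _

open BTree in
/-- Key induction: if `t` and `t'` have equal parents at all vertices of depth at
most `h`, then their depth sequences agree up to `h + 1` and their low ancestors
agree. -/
theorem main_forward (h n : ℕ) (t t' : BTree) (ht : t.size = n) (ht' : t'.size = n)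
    (R : ∀ i, 0 < i → i < n →
      (depthAt t i ≤ h ∨ depthAt t' i ≤ h) → parentAt t i = parentAt t' i) :
    ∀ j, j < n → (min (depthAt t j) (h + 1) = min (depthAt t' j) (h + 1)) ∧
      (∀ e, e ≤ h → e ≤ depthAt t j → ancAt t j e = ancAt t' j e) := by
  intro j
  induction j using Nat.strong_induction_on with
  | _ j IH =>
    intro hjn
    rcases Nat.eq_zero_or_pos j with rfl | hj0
    · constructor
      · rw [depthAt_zero, depthAt_zero]
      · intro e he hed
        rw [depthAt_zero] at hed
        simp [ancAt, depthAt_zero]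
    · have hjt : j < t.size := ht ▸ hjn
      have hjt' : j < t'.size := ht' ▸ hjn
      have hmin : min (depthAt t j) (h + 1) = min (depthAt t' j) (h + 1) := by
        by_cases hA : depthAt t j ≤ h ∨ depthAt t' j ≤ h
        · have hp := R j hj0 hjn hA
          have hrec := depthAt_parentAt t j hj0 hjt
          have hrec' := depthAt_parentAt t' j hj0 hjt'
          rw [← hp] at hrec'
          have hplt := parentAt_lt t j hj0 hjt
          have hIH := (IH (parentAt t j) hplt (by omega)).1
          omega
        · push_neg at hA
          omega
      refine ⟨hmin, ?_⟩
      intro e he hed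
      rcases eq_or_lt_of_le hed with heq | hlt
      · have hdd : depthAt t j = depthAt t' j := by omega
        rw [heq, ancAt_self, hdd, ancAt_self]
      · have het' : e < depthAt t' j := by omega
        have h1 := ancAt_pred t j e hj0 hjt hlt
        have h2 := ancAt_pred t' j e hj0 hjt' het'
        have hz := (zag t j hj0 hjt).1
        have hIH := (IH (j - 1) (by omega) (by omega)).2 e he (by omega)
        rw [h1, h2, hIH]

open BTree in
theorem trg_eq_of_R (h n : ℕ) (t t' : BTree) (ht : t.size = n) (ht' : t'.size = n)
    (R : ∀ i, 0 < i → i < n →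
      (depthAt t i ≤ h ∨ depthAt t' i ≤ h) → parentAt t i = parentAt t' i) :
    ∀ c, c < n → trg h t c = trg h t' c := by
  intro c hcn
  rcases Nat.eq_zero_or_pos c with rfl | hc0
  · rw [trg_zero, trg_zero]
  · have hct : c < t.size := ht ▸ hcn
    have hct' : c < t'.size := ht' ▸ hcn
    have hmin := (main_forward h n t t' ht ht' R c hcn).1
    have hz := (zag t c hc0 hct).1
    by_cases hd : depthAt t c ≤ h
    · have hd' : depthAt t' c ≤ h := by omega
      rw [trg, if_pos (by omega), trg, if_pos (by omega)]
      exact R c hc0 hcn (Or.inl hd)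
    · push_neg at hd
      have hd' : h + 1 ≤ depthAt t' c := by omega
      rw [trg_high h t c hc0 hct (by omega), trg_high h t' c hc0 hct' hd']
      exact (main_forward h n t t' ht ht' R (c - 1) (by omega)).2 h le_rfl (by omega)

namespace BTree

/-- `p` lies on the spine of `t` (the set of ancestors-or-self of the last vertex). -/
def OnSpine : BTree → ℕ → Prop
  | leaf, p => p = 0
  | node l r, p => p = 0 ∨ (l.size ≤ p ∧ OnSpine r (p - l.size))

theorem OnSpine.lt_size {t : BTree} {p : ℕ} (hp : OnSpine t p) : p < t.size := by
  induction t generalizing p with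
  | leaf => rw [OnSpine] at hp; subst hp; exact size_pos leaf
  | node l r ihl ihr =>
    have := l.size_pos
    rcases hp with h0 | ⟨hle, hsp⟩
    · subst h0
      have := (node l r).size_pos
      omega
    · have := ihr hsp
      show p < l.size + r.size
      omega

theorem parentAt_node_size (l r : BTree) : parentAt (node l r) l.size = 0 := by
  simp [parentAt]

theorem spine_aux (l r : BTree) (a : ℕ) :
    (parentAt (node l r))^[a] ((node l r).size - 1) = 0 ∨
      (l.size ≤ (parentAt (node l r))^[a] ((node l r).size - 1) ∧
       ∃ b, (parentAt r)^[b] (r.size - 1)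
          = (parentAt (node l r))^[a] ((node l r).size - 1) - l.size) := by
  have hls := l.size_pos
  have hrs := r.size_pos
  have hsz : (node l r).size = l.size + r.size := rfl
  induction a with
  | zero =>
    right
    rw [Function.iterate_zero_apply]
    constructor
    · omega
    · exact ⟨0, by rw [Function.iterate_zero_apply]; omega⟩
  | succ a ih =>
    rw [Function.iterate_succ_apply']
    rcases ih with h0 | ⟨hle, b, hb⟩
    · rw [h0, parentAt_zero]
      left; rfl
    · set v := (parentAt (node l r))^[a] ((node l r).size - 1) with hv
      rcases eq_or_lt_of_le hle with heq | hlt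
      · left
        rw [← heq, parentAt_node_size]
      · right
        rw [parentAt_node_right l r v hlt]
        refine ⟨by omega, b + 1, ?_⟩
        rw [Function.iterate_succ_apply', hb, Nat.add_sub_cancel]

theorem onSpine_of_reach (t : BTree) (p : ℕ)
    (hp : ∃ a, (parentAt t)^[a] (t.size - 1) = p) : OnSpine t p := by
  induction t generalizing p with
  | leaf =>
    obtain ⟨a, ha⟩ := hp
    rw [OnSpine]
    have : ∀ b, (parentAt leaf)^[b] (size leaf - 1) = 0 := by
      intro b
      induction b with
      | zero => rfl
      | succ b ih => rw [Function.iterate_succ_apply', ih]; rfl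
    rw [this a] at ha
    omega
  | node l r ihl ihr =>
    obtain ⟨a, ha⟩ := hp
    rcases spine_aux l r a with h0 | ⟨hle, b, hb⟩
    · rw [ha] at h0
      exact Or.inl h0
    · rw [ha] at hle hb
      exact Or.inr ⟨hle, ihr (p - l.size) ⟨b, hb⟩⟩

/-- Attach a new last leaf as a child of spine vertex `p`. -/
def attach : BTree → ℕ → BTree
  | t, 0 => node t leaf
  | leaf, _ + 1 => node leaf leaf
  | node l r, p + 1 => node l (attach r (p + 1 - l.size))

theorem size_attach (t : BTree) : ∀ p, OnSpine t p → (attach t p).size = t.size + 1 := by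
  induction t with
  | leaf =>
    intro p hp
    rw [OnSpine] at hp
    subst hp
    rfl
  | node l r ihl ihr =>
    intro p hp
    rcases hp with h0 | ⟨hle, hsp⟩
    · subst h0; rfl
    · have hls := l.size_pos
      have hp1 : ∃ q, p = q + 1 := ⟨p - 1, by omega⟩
      obtain ⟨q, rfl⟩ := hp1
      show (node l (attach r (q + 1 - l.size))).size = (node l r).size + 1
      show l.size + (attach r (q + 1 - l.size)).size = (l.size + r.size) + 1
      rw [ihr _ hsp]
      omega

theorem parentAt_attach (t : BTree) : ∀ p, OnSpine t p → ∀ c, c ≤ t.size →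
    parentAt (attach t p) c = if c = t.size then p else parentAt t c := by
  induction t with
  | leaf =>
    intro p hp c hc
    rw [OnSpine] at hp
    subst hp
    have h1 : size leaf = 1 := rfl
    rw [h1] at hc
    show parentAt (node leaf leaf) c = if c = size leaf then 0 else parentAt leaf c
    rw [h1]
    interval_cases c
    · rw [if_neg (by omega), parentAt_zero, parentAt_zero]
    · rw [if_pos rfl]
      exact parentAt_node_size leaf leaf
  | node l r ihl ihr =>
    intro p hp c hc
    have hls := l.size_pos
    have hrs := r.size_pos
    have hsz : (node l r).size = l.size + r.size := rfl
    rcases hp with h0 | ⟨hle, hsp⟩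
    · subst h0
      show parentAt (node (node l r) leaf) c = _
      rcases eq_or_lt_of_le hc with heq | hlt
      · subst heq
        rw [if_pos rfl, parentAt_node_size]
      · rw [if_neg (by omega), parentAt_node_left _ _ c hlt]
    · obtain ⟨q, rfl⟩ : ∃ q, p = q + 1 := ⟨p - 1, by omega⟩
      have hq := size_attach r _ hsp
      show parentAt (node l (attach r (q + 1 - l.size))) c = _
      rcases lt_trichotomy c l.size with hcl | hcl | hcl
      · rw [parentAt_node_left _ _ c hcl, if_neg (by omega), parentAt_node_left _ _ c hcl]
      · subst hcl
        rw [parentAt_node_size, if_neg (by omega), parentAt_node_size]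
      · rw [parentAt_node_right _ _ c hcl]
        rw [ihr _ hsp (c - l.size) (by omega)]
        rcases eq_or_lt_of_le hc with heq | hlt
        · subst heq
          rw [if_pos (by omega), if_pos rfl]
          omega
        · rw [if_neg (by omega), if_neg (by omega), parentAt_node_right _ _ c hcl]

end BTree

open BTree in
/-- Every DFS tree arises as the DFS tree of a bracketing. -/
theorem exists_btree : ∀ n, 1 ≤ n → ∀ T : DFSTree n,
    ∃ t : BTree, t.size = n ∧ ∀ i, 0 < i → i < n → parentAt t i = Pnat T i := by
  intro n hn
  induction n, hn using Nat.le_induction with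
  | base =>
    intro T
    exact ⟨BTree.leaf, rfl, by omega⟩
  | succ n hn IH =>
    intro T
    have hn1 : 0 < n + 1 := by omega
    set T' : DFSTree n := mkDFS n (Pnat T) (Pnat_zero T hn1)
      (fun i h0 hi => Pnat_lt T i h0 (by omega))
      (fun i h0 hi => Pnat_chain T i h0 (by omega)) with hT'
    obtain ⟨t0, hsz, hpar⟩ := IH T'
    have agree_all : ∀ x, x < n → parentAt t0 x = Pnat T x := by
      intro x hx
      rcases Nat.eq_zero_or_pos x with rfl | hx0
      · rw [parentAt_zero, Pnat_zero T hn1]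
      · rw [hpar x hx0 hx, hT', Pnat_mkDFS n _ _ _ _ x hx]
    obtain ⟨a, ha⟩ := Pnat_chain T n (by omega) (by omega)
    have hiter : ∀ b, (parentAt t0)^[b] (n - 1) = (Pnat T)^[b] (n - 1) := by
      intro b
      induction b with
      | zero => rfl
      | succ b ih =>
        rw [Function.iterate_succ_apply', Function.iterate_succ_apply', ← ih]
        apply agree_all
        have := iter_parentAt_le t0 b (n - 1)
        omega
    have hsp : OnSpine t0 (Pnat T n) := by
      apply onSpine_of_reach
      exact ⟨a, by rw [hsz, hiter a, ha]⟩
    refine ⟨attach t0 (Pnat T n), ?_, ?_⟩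
    · rw [size_attach t0 _ hsp, hsz]
    · intro i h0 hi
      have := parentAt_attach t0 _ hsp i (by omega)
      rw [this]
      split
      · rename_i heq
        rw [heq, hsz]
      · exact agree_all i (by omega)

open BTree in
/-- Two bracketings are equivalent iff their truncated DFS trees coincide. -/
theorem class_eq_iff (h n : ℕ) (t t' : {t : BTree // t.size = n}) :
    (∀ i < n, ((t : BTree).depth i ≤ h ∨ (t' : BTree).depth i ≤ h) →
      ∀ p : ℕ, ((p, i) ∈ (t : BTree).edges ↔ (p, i) ∈ (t' : BTree).edges))
    ↔ truncTree h n (t : BTree) t.2 = truncTree h n (t' : BTree) t'.2 := by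
  constructor
  · intro H
    have R : ∀ i, 0 < i → i < n →
        (depthAt (t : BTree) i ≤ h ∨ depthAt (t' : BTree) i ≤ h) →
        parentAt (t : BTree) i = parentAt (t' : BTree) i := by
      intro i h0 hi hd
      have hit : i < (t : BTree).size := by rw [t.2]; exact hi
      have hit' : i < (t' : BTree).size := by rw [t'.2]; exact hi
      have hd' : (t : BTree).depth i ≤ h ∨ (t' : BTree).depth i ≤ h := by
        rw [depth_eq_depthAt _ i hit, depth_eq_depthAt _ i hit']
        exact hd
      have hmem : (parentAt (t : BTree) i, i) ∈ (t : BTree).edges := by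
        rw [edges_mem]
        exact ⟨h0, hit, rfl⟩
      have := (H i hi hd' (parentAt (t : BTree) i)).mp hmem
      rw [edges_mem] at this
      exact this.2.2
    apply DFSTree.parent_ext
    funext i
    apply Fin.ext
    show trg h (t : BTree) (i : ℕ) = trg h (t' : BTree) (i : ℕ)
    exact trg_eq_of_R h n _ _ t.2 t'.2 R i i.isLt
  · intro HT i hi hdep p
    rcases Nat.eq_zero_or_pos i with rfl | h0
    · rw [edges_mem, edges_mem]
      simp
    · have hit : i < (t : BTree).size := by rw [t.2]; exact hi
      have hit' : i < (t' : BTree).size := by rw [t'.2]; exact hi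
      have e1 := truncTree_depth h n (t : BTree) t.2 ⟨i, hi⟩
      have e2 := truncTree_depth h n (t' : BTree) t'.2 ⟨i, hi⟩
      rw [HT] at e1
      have hdmin : min (depthAt (t : BTree) i) (h + 1)
          = min (depthAt (t' : BTree) i) (h + 1) := e1.symm.trans e2
      rw [depth_eq_depthAt _ i hit, depth_eq_depthAt _ i hit'] at hdep
      have hdd : depthAt (t : BTree) i ≤ h ∧ depthAt (t' : BTree) i ≤ h := by omega
      have hptrg : trg h (t : BTree) i = trg h (t' : BTree) i :=
        congrArg (fun T : DFSTree n => ((T.parent ⟨i, hi⟩ : Fin n) : ℕ)) HT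
      have hpar : parentAt (t : BTree) i = parentAt (t' : BTree) i := by
        have f1 : trg h (t : BTree) i = parentAt (t : BTree) i := if_pos (by omega)
        have f2 : trg h (t' : BTree) i = parentAt (t' : BTree) i := if_pos (by omega)
        rw [← f1, ← f2, hptrg]
      rw [edges_mem, edges_mem, t.2, t'.2, hpar]

end AssocSpec
open AssocSpec in
/-- For `h ≥ 0` and `n ≥ 1`, the equivalence relation on
`B_n` relating `t` and `t'` iff the DFS trees `G(t)` and `G(t')` coincide up
to level `h` (every vertex of depth at most `h` in either tree has the same
parent in both trees) has exactly `t_{h+1}(n)` equivalence classes. -/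
theorem stmt11 (h n : ℕ) (hn : 1 ≤ n) :
    Set.ncard {C : Set {t : BTree // t.size = n} |
      ∃ t : {t : BTree // t.size = n},
        C = {t' : {t : BTree // t.size = n} | ∀ i < n,
          ((t : BTree).depth i ≤ h ∨ (t' : BTree).depth i ≤ h) →
          ∀ p : ℕ, ((p, i) ∈ (t : BTree).edges ↔ (p, i) ∈ (t' : BTree).edges)}}
      = tcount (h + 1) n := by
  classical
  set F : {t : BTree // t.size = n} → {T : DFSTree n // T.height ≤ h + 1} :=
    fun t => ⟨truncTree h n (t : BTree) t.2, truncTree_height h n _ t.2⟩ with hF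
  have hFsurj : Function.Surjective F := by
    rintro ⟨T, hT⟩
    obtain ⟨t0, hsz, hpar⟩ := exists_btree n hn T
    refine ⟨⟨t0, hsz⟩, ?_⟩
    apply Subtype.ext
    show truncTree h n t0 hsz = T
    have hdepth : ∀ i : Fin n, T.depth i = BTree.depthAt t0 (i : ℕ) := by
      intro i
      refine DFSTree.depth_spec T (fun c => BTree.depthAt t0 c) (BTree.depthAt_zero t0) ?_ i
      intro x h0 hx
      rw [← hpar x h0 hx]
      exact BTree.depthAt_parentAt t0 x h0 (by rw [hsz]; exact hx)
    have hle : ∀ i : Fin n, BTree.depthAt t0 (i : ℕ) ≤ h + 1 := by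
      intro i
      rw [← hdepth i]
      exact le_trans (Finset.le_sup (Finset.mem_univ i)) hT
    apply DFSTree.parent_ext
    funext i
    apply Fin.ext
    show trg h t0 (i : ℕ) = ((T.parent i : Fin n) : ℕ)
    rw [trg, if_pos (hle i)]
    rcases Nat.eq_zero_or_pos (i : ℕ) with h0 | h0
    · rw [h0, BTree.parentAt_zero, T.parent_root i h0, h0]
    · rw [hpar i h0 i.isLt, Pnat_coe]
  have hclass : ∀ t : {t : BTree // t.size = n},
      {t' : {t : BTree // t.size = n} | ∀ i < n,
        ((t : BTree).depth i ≤ h ∨ (t' : BTree).depth i ≤ h) →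
        ∀ p : ℕ, ((p, i) ∈ (t : BTree).edges ↔ (p, i) ∈ (t' : BTree).edges)}
      = {t' | F t' = F t} := by
    intro t
    ext t'
    simp only [Set.mem_setOf_eq]
    rw [class_eq_iff h n t t']
    constructor
    · intro he
      exact Subtype.ext he.symm
    · intro he
      exact (congrArg Subtype.val he).symm
  have hset : {C : Set {t : BTree // t.size = n} |
      ∃ t : {t : BTree // t.size = n},
        C = {t' : {t : BTree // t.size = n} | ∀ i < n,
          ((t : BTree).depth i ≤ h ∨ (t' : BTree).depth i ≤ h) →
          ∀ p : ℕ, ((p, i) ∈ (t : BTree).edges ↔ (p, i) ∈ (t' : BTree).edges)}}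
      = Set.range (fun T : {T : DFSTree n // T.height ≤ h + 1} =>
          ({t' | F t' = T} : Set {t : BTree // t.size = n})) := by
    ext C
    simp only [Set.mem_setOf_eq, Set.mem_range]
    constructor
    · rintro ⟨t, rfl⟩
      exact ⟨F t, (hclass t).symm⟩
    · rintro ⟨T, rfl⟩
      obtain ⟨t, rfl⟩ := hFsurj T
      exact ⟨t, (hclass t).symm⟩
  rw [hset]
  have hinj : Function.Injective (fun T : {T : DFSTree n // T.height ≤ h + 1} =>
      ({t' | F t' = T} : Set {t : BTree // t.size = n})) := by
    intro T1 T2 hT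
    obtain ⟨t, rfl⟩ := hFsurj T1
    have ht : t ∈ {t' : {t : BTree // t.size = n} | F t' = F t} := rfl
    have hT2 : {t' : {t : BTree // t.size = n} | F t' = F t}
        = {t' : {t : BTree // t.size = n} | F t' = T2} := hT
    rw [hT2] at ht
    exact ht
  rw [← Nat.card_coe_set_eq, Nat.card_range_of_injective hinj]
  rfl
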